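/- Let q be a prime power. For every positive integer x, the sum over monic polynomials A ∈ 𝔽_q[T] with 1 ≤ deg A ≤ x of μ(A)·Ω(A)/q^{deg A} equals −#𝒲(x)/q^x, where 𝒲(x) is the set of monic polynomials B ∈ 𝔽_q[T] with deg B = x and Ω(B) = 1. -/

import Mathlib

open Filter Topology Polynomial Asymptotics
open scoped Classical

variable {F : Type} [Field F] [Fintype F]

/-- The Möbius function for (monic) polynomials over a finite field:
`μ(A) = 1` if `A = 1`, `(-1)^k` if `A` is a product of `k` distinct primes, `0` otherwise. -/
noncomputable def muFF (A : Polynomial F) : ℤ :=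
  if Squarefree A then
    (-1) ^ (UniqueFactorizationMonoid.normalizedFactors A).toFinset.card
  else 0

/-- `𝒩(A)`: the set of degrees of prime (monic irreducible) divisors of `A`. -/
noncomputable def NSet (A : Polynomial F) : Finset ℕ :=
  (Finset.range (A.natDegree + 1)).filter fun d =>
    ∃ P : Polynomial F, P.Monic ∧ Irreducible P ∧ P ∣ A ∧ P.natDegree = d

/-- `Ω(A)`: the number of distinct degrees of prime divisors of `A`. -/
noncomputable def OmegaFF (A : Polynomial F) : ℕ := (NSet A).card

/-- `δ_k(A)`: the `k`-th smallest element of `𝒩(A)` (and `0` if `k > Ω(A)`). -/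
noncomputable def deltaSmall (k : ℕ) (A : Polynomial F) : ℕ :=
  ((NSet A).sort (· ≤ ·)).getD (k - 1) 0

/-- `Δ_k(A)`: the `k`-th largest element of `𝒩(A)` (and `0` if `k > Ω(A)`). -/
noncomputable def DeltaLarge (k : ℕ) (A : Polynomial F) : ℕ :=
  (((NSet A).sort (· ≤ ·)).reverse).getD (k - 1) 0

/-- `P_min(A)`: the set of prime divisors of `A` of minimal degree `δ₁(A)`. -/
noncomputable def Pmin (A : Polynomial F) : Set (Polynomial F) :=
  {P | P.Monic ∧ Irreducible P ∧ P ∣ A ∧ P.natDegree = deltaSmall 1 A}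

/-- `𝒟(𝒮)`: monic polynomials whose set of minimal-degree prime divisors is a
singleton `{P}` with `P ∈ 𝒮`. -/
noncomputable def DSet (S : Set (Polynomial F)) : Set (Polynomial F) :=
  {A | A.Monic ∧ ∃ P ∈ S, Pmin A = {P}}

/-- `Q_𝒮^{(k)}(A) = #{P ∈ 𝒮 : P ∣ A, deg P = Δ_k(A)}`. -/
noncomputable def QS (S : Set (Polynomial F)) (k : ℕ) (A : Polynomial F) : ℕ :=
  {P | P ∈ S ∧ P ∣ A ∧ P.natDegree = DeltaLarge k A}.ncard

/-!
For monic `B`, `∑_{D ∣ B monic} μ(D) Ω(D) = -[Ω(B) = 1]`. Only squarefree `D` contribute; they are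
the products `∏ S` over subsets `S` of the prime factors of `B`, with `μ(∏ S) = (-1)^#S` and
`Ω(∏ S)` the number of degrees met by `S`. For each degree `d` of a prime factor of `B`, the signed
count of the subsets meeting degree `d` is `-1` if all prime factors of `B` have degree `d`, and `0`
otherwise.

Summing over monic `B` of degree `x`, where a monic `D` of degree `b ≤ x` divides exactly `q^(x-b)`
of them, gives `-#𝒲(x) = ∑_{b ≤ x} q^(x-b) ∑_{deg D = b} μ(D) Ω(D)`. Dividing by `q^x` is the claim;
the term `b = 0` vanishes since `Ω(1) = 0`.
-/

open Finset UniqueFactorizationMonoid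

namespace Finset

variable {α β : Type*} [DecidableEq α] [DecidableEq β]

theorem sum_powerset_neg_one_pow_card_filter_mem_image (T : Finset α) (g : α → β) {d : β}
    (hd : d ∈ T.image g) :
    ∑ S ∈ T.powerset with d ∈ S.image g, (-1 : ℤ) ^ #S = -if T.image g = {d} then 1 else 0 := by
  have hcompl : {S ∈ T.powerset | d ∉ S.image g} = {t ∈ T | g t ≠ d}.powerset := by
    ext S
    simp only [mem_filter, mem_powerset, mem_image, not_exists, not_and, subset_iff]
    grind
  have hsingleton : T.image g = {d} ↔ {t ∈ T | g t ≠ d} = ∅ := by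
    rw [filter_eq_empty_iff]
    refine ⟨fun h t ht => not_not.mpr (mem_singleton.mp (h ▸ mem_image_of_mem g ht)), fun h => ?_⟩
    refine eq_singleton_iff_unique_mem.mpr ⟨hd, fun e he => ?_⟩
    obtain ⟨t, ht, rfl⟩ := mem_image.mp he
    exact not_not.mp (h ht)
  have := sum_filter_add_sum_filter_not T.powerset (fun S => d ∈ S.image g) fun S => (-1 : ℤ) ^ #S
  rw [sum_powerset_neg_one_pow_card_of_nonempty (image_nonempty.mp ⟨d, hd⟩), hcompl,
    sum_powerset_neg_one_pow_card] at this
  simp only [← hsingleton] at this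
  omega

theorem sum_powerset_neg_one_pow_card_mul_card_image (T : Finset α) (g : α → β) :
    ∑ S ∈ T.powerset, (-1 : ℤ) ^ #S * #(S.image g) = -if #(T.image g) = 1 then 1 else 0 := by
  have hcard : ∀ S ∈ T.powerset,
      (#(S.image g) : ℤ) = ∑ d ∈ T.image g, if d ∈ S.image g then 1 else 0 := by
    intro S hS
    rw [sum_boole, filter_mem_eq_inter,
      inter_eq_right.mpr (image_subset_image (mem_powerset.mp hS))]
  calc ∑ S ∈ T.powerset, (-1 : ℤ) ^ #S * #(S.image g)
      = ∑ S ∈ T.powerset, ∑ d ∈ T.image g, if d ∈ S.image g then (-1 : ℤ) ^ #S else 0 :=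
        sum_congr rfl fun S hS => by simp only [hcard S hS, mul_sum, mul_boole]
    _ = ∑ d ∈ T.image g, ∑ S ∈ T.powerset with d ∈ S.image g, (-1 : ℤ) ^ #S := by
        rw [sum_comm]
        simp only [sum_filter]
    _ = -∑ d ∈ T.image g, if T.image g = {d} then 1 else 0 := by
        rw [← sum_neg_distrib]
        exact sum_congr rfl fun d hd => sum_powerset_neg_one_pow_card_filter_mem_image T g hd
    _ = _ := by
        split_ifs with h
        · obtain ⟨a, ha⟩ := card_eq_one.mp h
          simp [ha]
        · rw [sum_eq_zero fun d _ => if_neg fun hd => h (by rw [hd, card_singleton]), neg_zero]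

end Finset

namespace UniqueFactorizationMonoid

variable {M : Type*} [CommMonoidWithZero M] [NormalizationMonoid M] [UniqueFactorizationMonoid M]
  {a : M} {S : Finset M}

theorem primeFactors_prod_id_of_subset_primeFactors (hS : S ⊆ primeFactors a) :
    primeFactors (S.prod id) = S := by
  have hmem : ∀ P ∈ S, P ∈ normalizedFactors a := fun P hP => mem_primeFactors.mp (hS hP)
  have hnf : normalizedFactors (S.prod id) = S.val := by
    rw [← prod_val, normalizedFactors_prod_eq _ fun P hP =>
        irreducible_of_normalized_factor P (hmem P hP),
      Multiset.map_congr rfl fun P hP => normalize_normalized_factor P (hmem P hP),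
      Multiset.map_id']
  rw [← toFinset_normalizedFactors, hnf, val_toFinset]

theorem prod_id_dvd_of_subset_primeFactors (hS : S ⊆ primeFactors a) : S.prod id ∣ a :=
  (prod_dvd_prod_of_subset S _ id hS).trans radical_dvd_self

theorem squarefree_prod_id_of_subset_primeFactors (hS : S ⊆ primeFactors a) :
    Squarefree (S.prod id) :=
  squarefree_radical.squarefree_of_dvd (prod_dvd_prod_of_subset S _ id hS)

end UniqueFactorizationMonoid

namespace Polynomial

section MonicOfDegree

variable (R : Type*) [Semiring R] [Nontrivial R]

noncomputable def monicEquivFun (n : ℕ) : {p : R[X] // p.Monic ∧ p.natDegree = n} ≃ (Fin n → R) :=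
  (monicEquivDegreeLT n).trans (degreeLTEquiv R n).toEquiv

variable [Fintype R]

noncomputable def monicOfDegree (n : ℕ) : Finset R[X] :=
  univ.map ((monicEquivFun R n).symm.toEmbedding.trans (Function.Embedding.subtype _))

variable {R}

theorem mem_monicOfDegree {n : ℕ} {p : R[X]} :
    p ∈ monicOfDegree R n ↔ p.Monic ∧ p.natDegree = n := by
  refine ⟨?_, fun hp => ?_⟩
  · rw [monicOfDegree, Finset.mem_map]
    rintro ⟨c, -, rfl⟩
    exact ((monicEquivFun R n).symm c).2
  · exact Finset.mem_map.mpr ⟨monicEquivFun R n ⟨p, hp⟩, mem_univ _, by simp⟩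

theorem card_monicOfDegree (n : ℕ) : #(monicOfDegree R n) = Fintype.card R ^ n := by
  rw [monicOfDegree, card_map, card_univ, Fintype.card_fun, Fintype.card_fin]

theorem monicOfDegree_zero : monicOfDegree R 0 = {1} := by
  ext p
  rw [mem_monicOfDegree, mem_singleton]
  exact ⟨fun ⟨hp, hd⟩ => hp.natDegree_eq_zero.mp hd, fun h => h ▸ ⟨monic_one, natDegree_one⟩⟩

end MonicOfDegree

section MonicDivisors

variable {R : Type*} [CommRing R] [Nontrivial R] [Fintype R]

theorem disjoint_monicOfDegree {m n : ℕ} (h : m ≠ n) :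
    Disjoint (monicOfDegree R m) (monicOfDegree R n) :=
  disjoint_left.mpr fun _ hm hn =>
    h ((mem_monicOfDegree.mp hm).2.symm.trans (mem_monicOfDegree.mp hn).2)

theorem card_monicOfDegree_filter_dvd {D : R[X]} (hD : D.Monic) {n : ℕ} (h : D.natDegree ≤ n) :
    #{B ∈ monicOfDegree R n | D ∣ B} = Fintype.card R ^ (n - D.natDegree) := by
  have : {B ∈ monicOfDegree R n | D ∣ B} = (monicOfDegree R (n - D.natDegree)).image (D * ·) := by
    ext B
    simp only [mem_filter, mem_image, mem_monicOfDegree]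
    constructor
    · rintro ⟨⟨hB, rfl⟩, C, rfl⟩
      have hC := hD.of_mul_monic_left hB
      exact ⟨C, ⟨hC, by rw [hD.natDegree_mul hC]; omega⟩, rfl⟩
    · rintro ⟨C, ⟨hC, hCn⟩, rfl⟩
      exact ⟨⟨hD.mul hC, by rw [hD.natDegree_mul hC]; omega⟩, dvd_mul_right D C⟩
  rw [this, card_image_of_injective _ hD.isRegular.left, card_monicOfDegree]

noncomputable def monicDivisors (B : R[X]) : Finset R[X] :=
  {D ∈ (range (B.natDegree + 1)).biUnion (monicOfDegree R) | D ∣ B}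

theorem mem_monicDivisors {B D : R[X]} (hB : B.Monic) :
    D ∈ monicDivisors B ↔ D.Monic ∧ D ∣ B := by
  simp only [monicDivisors, mem_filter, mem_biUnion, mem_range, mem_monicOfDegree]
  constructor
  · rintro ⟨⟨_, _, hD, -⟩, hDB⟩
    exact ⟨hD, hDB⟩
  · rintro ⟨hD, C, rfl⟩
    have hC := hD.of_mul_monic_left hB
    exact ⟨⟨D.natDegree, by rw [hD.natDegree_mul hC]; omega, hD, rfl⟩, dvd_mul_right D C⟩

theorem sum_monicOfDegree_sum_monicDivisors {M : Type*} [AddCommMonoid M] (n : ℕ)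
    (f : R[X] → M) :
    ∑ B ∈ monicOfDegree R n, ∑ D ∈ monicDivisors B, f D =
      ∑ b ∈ range (n + 1), Fintype.card R ^ (n - b) • ∑ D ∈ monicOfDegree R b, f D := by
  set U := (range (n + 1)).biUnion (monicOfDegree R)
  have hU : ∀ B ∈ monicOfDegree R n, monicDivisors B = {D ∈ U | D ∣ B} := by
    intro B hB
    rw [monicDivisors, (mem_monicOfDegree.mp hB).2]
  have hdisj : (range (n + 1) : Set ℕ).PairwiseDisjoint (monicOfDegree R) :=
    fun _ _ _ _ h => disjoint_monicOfDegree h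
  calc ∑ B ∈ monicOfDegree R n, ∑ D ∈ monicDivisors B, f D
      = ∑ D ∈ U, ∑ B ∈ monicOfDegree R n, if D ∣ B then f D else 0 := by
        rw [sum_comm, sum_congr rfl fun B hB => by rw [hU B hB, sum_filter]]
    _ = ∑ D ∈ U, Fintype.card R ^ (n - D.natDegree) • f D := by
        refine sum_congr rfl fun D hD => ?_
        obtain ⟨b, hb, hDb⟩ := mem_biUnion.mp hD
        obtain ⟨hD, rfl⟩ := mem_monicOfDegree.mp hDb
        rw [← sum_filter, sum_const,
          card_monicOfDegree_filter_dvd hD (by simpa [Nat.lt_succ_iff] using hb)]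
    _ = _ := by
        rw [sum_biUnion hdisj]
        refine sum_congr rfl fun b _ => ?_
        rw [smul_sum]
        exact sum_congr rfl fun D hD => by rw [(mem_monicOfDegree.mp hD).2]

end MonicDivisors

section ArithmeticFunctions

variable {K : Type} [Field K] {A B : K[X]}

theorem NSet_eq_image_primeFactors (hA : A ≠ 0) : NSet A = (primeFactors A).image natDegree := by
  ext d
  simp only [NSet, mem_filter, mem_range, mem_image, mem_primeFactors,
    Polynomial.mem_normalizedFactors_iff hA]
  constructor
  · rintro ⟨-, P, hm, hi, hdvd, rfl⟩
    exact ⟨P, ⟨hi, hm, hdvd⟩, rfl⟩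
  · rintro ⟨P, ⟨hi, hm, hdvd⟩, rfl⟩
    exact ⟨Nat.lt_succ_of_le (natDegree_le_of_dvd hdvd hA), P, hm, hi, hdvd, rfl⟩

theorem muFF_of_squarefree (h : Squarefree A) : muFF A = (-1) ^ #(primeFactors A) := by
  rw [muFF, if_pos h, toFinset_normalizedFactors]

theorem OmegaFF_one : OmegaFF (1 : K[X]) = 0 := by
  rw [OmegaFF, NSet_eq_image_primeFactors one_ne_zero, primeFactors_of_isUnit isUnit_one,
    image_empty, card_empty]

variable [Fintype K]

theorem filter_squarefree_monicDivisors (hB : B.Monic) :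
    {D ∈ monicDivisors B | Squarefree D} = (primeFactors B).powerset.image (·.prod id) := by
  ext D
  simp only [mem_filter, mem_monicDivisors hB, mem_image, mem_powerset]
  constructor
  · rintro ⟨⟨hD, hDB⟩, hsq⟩
    refine ⟨primeFactors D, fun P hP => ?_, ?_⟩
    · rw [mem_primeFactors, Polynomial.mem_normalizedFactors_iff hD.ne_zero] at hP
      rw [mem_primeFactors, Polynomial.mem_normalizedFactors_iff hB.ne_zero]
      exact ⟨hP.1, hP.2.1, hP.2.2.trans hDB⟩
    · exact eq_of_monic_of_associated (monic_prod_of_monic _ _ fun P hP =>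
        ((Polynomial.mem_normalizedFactors_iff hD.ne_zero).mp (mem_primeFactors.mp hP)).2.1) hD
        (radical_associated hsq.isRadical hD.ne_zero)
  · rintro ⟨S, hS, rfl⟩
    refine ⟨⟨monic_prod_of_monic _ _ fun P hP => ?_, prod_id_dvd_of_subset_primeFactors hS⟩,
      squarefree_prod_id_of_subset_primeFactors hS⟩
    exact ((Polynomial.mem_normalizedFactors_iff hB.ne_zero).mp (mem_primeFactors.mp (hS hP))).2.1

theorem sum_monicDivisors_muFF_mul_OmegaFF (hB : B.Monic) :
    ∑ D ∈ monicDivisors B, muFF D * (OmegaFF D : ℤ) = -if OmegaFF B = 1 then 1 else 0 := by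
  have hinj : Set.InjOn (·.prod id) ((primeFactors B).powerset : Set (Finset K[X])) :=
    fun S hS T hT h => by
      simpa only [primeFactors_prod_id_of_subset_primeFactors (mem_powerset.mp hS),
        primeFactors_prod_id_of_subset_primeFactors (mem_powerset.mp hT)] using
        congrArg primeFactors h
  calc ∑ D ∈ monicDivisors B, muFF D * (OmegaFF D : ℤ)
      = ∑ D ∈ monicDivisors B with Squarefree D, muFF D * (OmegaFF D : ℤ) := by
        refine (sum_filter_of_ne fun D _ h => ?_).symm
        by_contra hsq
        simp [muFF, hsq] at h
    _ = ∑ S ∈ (primeFactors B).powerset, (-1 : ℤ) ^ #S * #(S.image natDegree) := by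
        rw [filter_squarefree_monicDivisors hB, sum_image hinj]
        refine sum_congr rfl fun S hS => ?_
        have hS := mem_powerset.mp hS
        have hne : S.prod id ≠ 0 := (squarefree_prod_id_of_subset_primeFactors hS).ne_zero
        rw [muFF_of_squarefree (squarefree_prod_id_of_subset_primeFactors hS), OmegaFF,
          NSet_eq_image_primeFactors hne, primeFactors_prod_id_of_subset_primeFactors hS]
    _ = _ := by
        rw [sum_powerset_neg_one_pow_card_mul_card_image, OmegaFF,
          NSet_eq_image_primeFactors hB.ne_zero]


theorem sum_range_card_pow_mul_sum_muFF_mul_OmegaFF (x : ℕ) :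
    ∑ b ∈ range (x + 1), (Fintype.card K : ℤ) ^ (x - b) *
        ∑ A ∈ monicOfDegree K b, muFF A * (OmegaFF A : ℤ) =
      -#{B ∈ monicOfDegree K x | OmegaFF B = 1} := by
  simp only [← nsmul_eq_mul, ← Nat.cast_pow]
  rw [← sum_monicOfDegree_sum_monicDivisors, sum_congr rfl fun B hB =>
    sum_monicDivisors_muFF_mul_OmegaFF (mem_monicOfDegree.mp hB).1, sum_neg_distrib, sum_boole]

theorem sum_Icc_sum_monicOfDegree_muFF_mul_OmegaFF_div_pow (x : ℕ) :
    ∑ b ∈ Icc 1 x, ∑ A ∈ monicOfDegree K b,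
        (muFF A : ℝ) * OmegaFF A / (Fintype.card K : ℝ) ^ A.natDegree =
      -(#{B ∈ monicOfDegree K x | OmegaFF B = 1} / (Fintype.card K : ℝ) ^ x) := by
  have hq : (Fintype.card K : ℝ) ≠ 0 := Nat.cast_ne_zero.mpr Fintype.card_ne_zero
  have hcount :=
    congrArg (Int.cast : ℤ → ℝ) (sum_range_card_pow_mul_sum_muFF_mul_OmegaFF (K := K) x)
  push_cast at hcount
  rw [← neg_div, ← hcount, sum_div, range_eq_Ico, sum_eq_sum_Ico_succ_bot x.succ_pos,
    monicOfDegree_zero]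
  simp only [sum_singleton, OmegaFF_one, Nat.cast_zero, mul_zero, zero_div, zero_add]
  refine sum_congr rfl fun b hb => ?_
  have hdeg : ∀ A ∈ monicOfDegree K b,
      (muFF A : ℝ) * OmegaFF A / (Fintype.card K : ℝ) ^ A.natDegree =
        muFF A * OmegaFF A / (Fintype.card K : ℝ) ^ b :=
    fun A hA => by rw [(mem_monicOfDegree.mp hA).2]
  rw [sum_congr rfl hdeg, ← sum_div, ← pow_sub_mul_pow _ (Nat.lt_succ_iff.mp (mem_Ico.mp hb).2)]
  field_simp

end ArithmeticFunctions

end Polynomial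

theorem stmt8_general (x : ℕ) :
    ∑ᶠ A ∈ {A : Polynomial F | A.Monic ∧ 1 ≤ A.natDegree ∧ A.natDegree ≤ x},
        (muFF A : ℝ) * (OmegaFF A : ℝ) / (Fintype.card F : ℝ) ^ A.natDegree
      = -(({B : Polynomial F | B.Monic ∧ B.natDegree = x ∧ OmegaFF B = 1}.ncard : ℝ) /
          (Fintype.card F : ℝ) ^ x) := by
  have hA : {A : F[X] | A.Monic ∧ 1 ≤ A.natDegree ∧ A.natDegree ≤ x} =
      ↑((Icc 1 x).biUnion (monicOfDegree F)) := by
    ext A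
    simp [mem_monicOfDegree]
  have hB : {B : F[X] | B.Monic ∧ B.natDegree = x ∧ OmegaFF B = 1} =
      ↑{B ∈ monicOfDegree F x | OmegaFF B = 1} := by
    ext B
    simp [mem_monicOfDegree, and_assoc]
  rw [hA, hB, finsum_mem_coe_finset, Set.ncard_coe_finset,
    sum_biUnion fun _ _ _ _ h => disjoint_monicOfDegree h,
    sum_Icc_sum_monicOfDegree_muFF_mul_OmegaFF_div_pow]

/-- The weighted Möbius sum up to degree `x` equals `-#𝒲(x)/q^x`, where `𝒲(x)` is the set
of monic polynomials of degree `x` with `Ω = 1`. -/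
theorem stmt8 (x : ℕ) (hx : 0 < x) :
    ∑ᶠ A ∈ {A : Polynomial F | A.Monic ∧ 1 ≤ A.natDegree ∧ A.natDegree ≤ x},
        (muFF A : ℝ) * (OmegaFF A : ℝ) / (Fintype.card F : ℝ) ^ A.natDegree
      = -(({B : Polynomial F | B.Monic ∧ B.natDegree = x ∧ OmegaFF B = 1}.ncard : ℝ) /
          (Fintype.card F : ℝ) ^ x) :=
  stmt8_general x
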